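/- arXiv:2008.03258 — 2 statements merged into one kernel-verified Lean document; each statement's English description precedes it below -/
import Mathlib

section
/- Let Q̄ be an imprecise probability tree, let E be a global upper expectation satisfying axioms P1–P4 together with the law of iterated upper expectations P3=, and let E' be any global upper expectation satisfying P1–P4. Then E(f|s) ≥ E'(f|s) for every finitary gamble f and every situation s ∈ 𝒳*. -/
open Filter MeasureTheory
open scoped Classical ENNReal NNReal

namespace UEP

variable {X : Type*}

/-- The string of the first `n` states of a path `ω`. -/
def pref (ω : ℕ → X) (n : ℕ) : List X := List.ofFn (fun i : Fin n => ω i)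

/-- The cylinder event of a situation `s`. -/
def cyl (s : List X) : Set (ℕ → X) := {ω : ℕ → X | pref ω s.length = s}

/-- `f` depends only on the first `n` states. -/
def NMeas (n : ℕ) (f : (ℕ → X) → EReal) : Prop :=
  ∀ ω₁ ω₂ : ℕ → X, pref ω₁ n = pref ω₂ n → f ω₁ = f ω₂

/-- `f` is bounded below (by a real constant). -/
def IsBddBelow (f : (ℕ → X) → EReal) : Prop := ∃ c : ℝ, ∀ ω, (c : EReal) ≤ f ω

/-- `f` is bounded above (by a real constant). -/
def IsBddAbove (f : (ℕ → X) → EReal) : Prop := ∃ c : ℝ, ∀ ω, f ω ≤ (c : EReal)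

/-- `f` is real-valued and bounded. -/
def IsGambleVal (f : (ℕ → X) → EReal) : Prop :=
  ∃ a b : ℝ, ∀ ω, (a : EReal) ≤ f ω ∧ f ω ≤ (b : EReal)

/-- `f` is an `n`-measurable gamble. -/
def IsNGamble (n : ℕ) (f : (ℕ → X) → EReal) : Prop := NMeas n f ∧ IsGambleVal f

/-- `f` is a finitary gamble. -/
def IsFinitaryGamble (f : (ℕ → X) → EReal) : Prop := (∃ n, NMeas n f) ∧ IsGambleVal f

/-- `f` is finitary. -/
def IsFinitary (f : (ℕ → X) → EReal) : Prop := ∃ n, NMeas n f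

/-- pointwise convergence of a sequence of global variables. -/
def PtwLim (fs : ℕ → (ℕ → X) → EReal) (f : (ℕ → X) → EReal) : Prop :=
  ∀ ω, Tendsto (fun n => fs n ω) atTop (nhds (f ω))

/-- the sequence is uniformly bounded below. -/
def UnifBddBelow (fs : ℕ → (ℕ → X) → EReal) : Prop :=
  ∃ c : ℝ, ∀ n ω, (c : EReal) ≤ fs n ω

/-- `f` belongs to `V̄_{b,lim}`: bounded below and a pointwise limit of finitary gambles. -/
def Vblim (f : (ℕ → X) → EReal) : Prop :=
  IsBddBelow f ∧ ∃ fs : ℕ → (ℕ → X) → EReal,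
    (∀ n, IsFinitaryGamble (fs n)) ∧ PtwLim fs f

/-- A coherent upper expectation on the finite state space `X`. -/
def IsCoherent [Fintype X] (Q : (X → ℝ) → ℝ) : Prop :=
  (∀ f : X → ℝ, Q f ≤ ⨆ x, f x) ∧
  (∀ f g : X → ℝ, Q (fun x => f x + g x) ≤ Q f + Q g) ∧
  (∀ l : ℝ, 0 ≤ l → ∀ f : X → ℝ, Q (fun x => l * f x) = l * Q f)

/-- Axiom P1: compatibility with the local models. -/
def P1 (Q : List X → (X → ℝ) → ℝ) (E : ((ℕ → X) → EReal) → List X → EReal) : Prop :=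
  ∀ (s : List X) (f : X → ℝ),
    E (fun ω => (f (ω s.length) : EReal)) s = ((Q s f : ℝ) : EReal)

/-- Axiom P2. -/
def P2 (E : ((ℕ → X) → EReal) → List X → EReal) : Prop :=
  ∀ f : (ℕ → X) → EReal, IsFinitaryGamble f → ∀ s : List X,
    E f s = E (fun ω => if ω ∈ cyl s then f ω else 0) s

/-- Axiom P3 (inequality form). -/
def P3le (E : ((ℕ → X) → EReal) → List X → EReal) : Prop :=
  ∀ f : (ℕ → X) → EReal, IsFinitaryGamble f → ∀ (n : ℕ) (ω : ℕ → X),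
    E f (pref ω n) ≤ E (fun ω' => E f (pref ω' (n + 1))) (pref ω n)

/-- Axiom P3 with equality: the law of iterated upper expectations. -/
def P3eq (E : ((ℕ → X) → EReal) → List X → EReal) : Prop :=
  ∀ f : (ℕ → X) → EReal, IsFinitaryGamble f → ∀ (n : ℕ) (ω : ℕ → X),
    E f (pref ω n) = E (fun ω' => E f (pref ω' (n + 1))) (pref ω n)

/-- Axiom P4: monotonicity. -/
def P4 (E : ((ℕ → X) → EReal) → List X → EReal) : Prop :=
  ∀ f g : (ℕ → X) → EReal, (∀ ω, f ω ≤ g ω) → ∀ s : List X, E f s ≤ E g s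

/-- Axiom P5. -/
def P5 (E : ((ℕ → X) → EReal) → List X → EReal) : Prop :=
  ∀ (s : List X) (f : (ℕ → X) → EReal) (fs : ℕ → (ℕ → X) → EReal),
    (∀ n, IsFinitaryGamble (fs n)) → UnifBddBelow fs → PtwLim fs f →
    E f s ≤ limsup (fun n => E (fs n) s) atTop

/-- Axiom P6. -/
def P6 (E : ((ℕ → X) → EReal) → List X → EReal) : Prop :=
  ∀ f : (ℕ → X) → EReal, Vblim f → ∀ s : List X,
    ∃ fs : ℕ → (ℕ → X) → EReal,
      (∀ n, IsNGamble n (fs n)) ∧ UnifBddBelow fs ∧ PtwLim fs f ∧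
      limsup (fun n => E (fs n) s) atTop ≤ E f s

/-- Axiom P7. -/
def P7 (E : ((ℕ → X) → EReal) → List X → EReal) : Prop :=
  ∀ (f : (ℕ → X) → EReal) (s : List X),
    E f s = sInf {y : EReal | ∃ g : (ℕ → X) → EReal,
      Vblim g ∧ (∀ ω, f ω ≤ g ω) ∧ y = E g s}

/-- bundled axioms P1–P5. -/
def P15 (Q : List X → (X → ℝ) → ℝ) (E : ((ℕ → X) → EReal) → List X → EReal) : Prop :=
  P1 Q E ∧ P2 E ∧ P3le E ∧ P4 E ∧ P5 E

/-- `Qe` extends `Q` from gambles to extended-real variables. -/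
def ExtendsLocal [Fintype X] (Q : (X → ℝ) → ℝ) (Qe : (X → EReal) → EReal) : Prop :=
  ∀ f : X → ℝ, Qe (fun x => (f x : EReal)) = ((Q f : ℝ) : EReal)

/-- continuity with respect to upper cuts. -/
def UpperCutCont (Qe : (X → EReal) → EReal) : Prop :=
  ∀ f : X → EReal, (∃ c : ℝ, ∀ x, (c : EReal) ≤ f x) →
    Tendsto (fun c : ℝ => Qe (fun x => min (f x) (c : EReal))) atTop (nhds (Qe f))

/-- continuity with respect to lower cuts. -/
def LowerCutCont (Qe : (X → EReal) → EReal) : Prop :=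
  ∀ f : X → EReal,
    Tendsto (fun c : ℝ => Qe (fun x => max (f x) (c : EReal))) atBot (nhds (Qe f))

/-- `Qe` is the extension of the imprecise probability tree `Q` satisfying
continuity with respect to upper and lower cuts. -/
def LocalExtension [Fintype X] (Q : List X → (X → ℝ) → ℝ)
    (Qe : List X → (X → EReal) → EReal) : Prop :=
  ∀ s : List X, ExtendsLocal (Q s) (Qe s) ∧ UpperCutCont (Qe s) ∧ LowerCutCont (Qe s)

/-- supermartingale with respect to the extended local models `Qe`. -/
def IsSupermart (Qe : List X → (X → EReal) → EReal) (M : List X → EReal) : Prop :=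
  ∀ s : List X, Qe s (fun x => M (s ++ [x])) ≤ M s

/-- a bounded-below process. -/
def MBddBelow (M : List X → EReal) : Prop := ∃ c : ℝ, ∀ s : List X, (c : EReal) ≤ M s

/-- the game-theoretic upper expectation (Shafer–Vovk). -/
noncomputable def EV (Qe : List X → (X → EReal) → EReal)
    (f : (ℕ → X) → EReal) (s : List X) : EReal :=
  sInf {y : EReal | ∃ M : List X → EReal, MBddBelow M ∧ IsSupermart Qe M ∧
    (∀ ω ∈ cyl s, f ω ≤ liminf (fun n => M (pref ω n)) atTop) ∧ y = M s}

/-- a canonical path passing through the situation `s`. -/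
noncomputable def extPath [Nonempty X] (s : List X) : ℕ → X :=
  fun i => if h : i < s.length then s.get ⟨i, h⟩ else Classical.arbitrary X

/-- extended-real addition with the convention `(+∞) + (−∞) = (−∞) + (+∞) = +∞`. -/
noncomputable def eadd (a b : EReal) : EReal := if a = ⊤ ∨ b = ⊤ then ⊤ else a + b

/-- extended-real finite sums with the conventions `0·(±∞) = 0` and
`(+∞) + (−∞) = +∞`. -/
noncomputable def esum {α : Type*} (s : Finset α) (f : α → EReal) : EReal :=
  if ∃ x ∈ s, f x = ⊤ then ⊤ else ∑ x ∈ s, f x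

/-- the σ-algebra `ℱ` on paths generated by all cylinder events. -/
def cylSA (X : Type*) : MeasurableSpace (ℕ → X) :=
  MeasurableSpace.generateFrom {A : Set (ℕ → X) | ∃ s : List X, A = cyl s}

/-- a precise probability tree: a probability mass function in every situation. -/
def IsTree [Fintype X] (p : List X → X → ℝ) : Prop :=
  ∀ s : List X, (∀ x, 0 ≤ p s x) ∧ ∑ x, p s x = 1

/-- the `i`-th entry (0-based) of a list, i.e. the `(i+1)`-th state. -/
noncomputable def nthL [Nonempty X] (z : List X) (i : ℕ) : X :=
  z.getD i (Classical.arbitrary X)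

/-- `P` is the family of conditional probability measures on `ℱ` determined by
the precise probability tree `p` via the product formula on cylinder events. -/
def CylProp [Fintype X] [Nonempty X] (p : List X → X → ℝ)
    (P : List X → @Measure (ℕ → X) (cylSA X)) : Prop :=
  ∀ s z : List X,
    P s (cyl z) =
      if s.length < z.length ∧ z.take s.length = s then
        ∏ i ∈ Finset.Ico s.length z.length, ENNReal.ofReal (p (z.take i) (nthL z i))
      else if z.length ≤ s.length ∧ s.take z.length = z then 1 else 0

/-- the nonnegative part of an extended real, as an `ℝ≥0∞`. -/
noncomputable def toENN (a : EReal) : ℝ≥0∞ := if a = ⊤ then ⊤ else ENNReal.ofReal a.toReal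

/-- `∫ f⁺ dP`. -/
noncomputable def lpos (P : @Measure (ℕ → X) (cylSA X)) (f : (ℕ → X) → EReal) : ℝ≥0∞ :=
  @MeasureTheory.lintegral _ (cylSA X) P (fun ω => toENN (f ω))

/-- `∫ f⁻ dP`. -/
noncomputable def lneg (P : @Measure (ℕ → X) (cylSA X)) (f : (ℕ → X) → EReal) : ℝ≥0∞ :=
  @MeasureTheory.lintegral _ (cylSA X) P (fun ω => toENN (-(f ω)))

/-- the Lebesgue integral `∫ f dP = ∫ f⁺ dP − ∫ f⁻ dP`. -/
noncomputable def emeas (P : @Measure (ℕ → X) (cylSA X)) (f : (ℕ → X) → EReal) : EReal :=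
  (lpos P f : EReal) - (lneg P f : EReal)

/-- `ℱ`-measurability of a global variable. -/
def FMeasurable (f : (ℕ → X) → EReal) : Prop := @Measurable _ _ (cylSA X) _ f

/-- the Lebesgue integral `∫ f dP` exists. -/
def EMeasExists (P : @Measure (ℕ → X) (cylSA X)) (f : (ℕ → X) → EReal) : Prop :=
  FMeasurable f ∧ min (lpos P f) (lneg P f) < ⊤

/-- the upper integral `Ē¹`. -/
noncomputable def upInt1 (P : @Measure (ℕ → X) (cylSA X)) (f : (ℕ → X) → EReal) : EReal :=
  sInf {y : EReal | ∃ g : (ℕ → X) → EReal,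
    FMeasurable g ∧ IsBddBelow g ∧ (∀ ω, f ω ≤ g ω) ∧ y = emeas P g}

/-- the upper integral `Ē²`. -/
noncomputable def upInt2 (P : @Measure (ℕ → X) (cylSA X)) (f : (ℕ → X) → EReal) : EReal :=
  sInf {y : EReal | ∃ g : (ℕ → X) → EReal,
    EMeasExists P g ∧ (∀ ω, f ω ≤ g ω) ∧ y = emeas P g}

/-- the game-theoretic upper expectation with respect to a precise probability tree. -/
noncomputable def EVp [Fintype X] (p : List X → X → ℝ)
    (f : (ℕ → X) → EReal) (s : List X) : EReal :=
  sInf {y : EReal | ∃ M : List X → EReal, MBddBelow M ∧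
    (∀ t : List X, ∑ x, ((p t x : ℝ) : EReal) * M (t ++ [x]) ≤ M t) ∧
    (∀ ω ∈ cyl s, f ω ≤ liminf (fun n => M (pref ω n)) atTop) ∧ y = M s}

/-- the credal set of a coherent upper expectation. -/
def credal [Fintype X] (Q : (X → ℝ) → ℝ) : Set (X → ℝ) :=
  {q | (∀ x, 0 ≤ q x) ∧ (∑ x, q x = 1) ∧ ∀ f : X → ℝ, ∑ x, f x * q x ≤ Q f}

/-- a precise probability tree compatible with the imprecise probability tree `Q`. -/
def Compat [Fintype X] (Q : List X → (X → ℝ) → ℝ) (p : List X → X → ℝ) : Prop :=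
  ∀ s : List X, p s ∈ credal (Q s)

/-- the global measure-theoretic upper expectation. -/
noncomputable def Emeas [Fintype X] (Q : List X → (X → ℝ) → ℝ)
    (P : (List X → X → ℝ) → List X → @Measure (ℕ → X) (cylSA X))
    (f : (ℕ → X) → EReal) (s : List X) : EReal :=
  sSup {y : EReal | ∃ p : List X → X → ℝ, Compat Q p ∧ y = upInt1 (P p s) f}


lemma pref_length' (ω : ℕ → X) (n : ℕ) : (pref ω n).length = n := by
  simp [pref]

lemma pref_eq_iff' {ω₁ ω₂ : ℕ → X} {n : ℕ} :
    pref ω₁ n = pref ω₂ n ↔ ∀ i < n, ω₁ i = ω₂ i := by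
  constructor
  · intro h i hi
    have := List.ofFn_inj.mp h
    exact congrFun this ⟨i, hi⟩
  · intro h
    exact List.ofFn_inj.mpr (funext fun i => h i i.2)

lemma pref_mono' {ω₁ ω₂ : ℕ → X} {m n : ℕ} (hmn : m ≤ n)
    (h : pref ω₁ n = pref ω₂ n) : pref ω₁ m = pref ω₂ m :=
  pref_eq_iff'.mpr fun i hi => pref_eq_iff'.mp h i (lt_of_lt_of_le hi hmn)

lemma pref_succ' (ω : ℕ → X) (n : ℕ) : pref ω (n + 1) = pref ω n ++ [ω n] := by
  rw [pref, List.ofFn_succ', List.concat_eq_append]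
  rfl

lemma pref_extPath' [Nonempty X] (s : List X) : pref (extPath s) s.length = s := by
  apply List.ext_getElem (by simp [pref_length'])
  intro i h1 h2
  simp only [pref, List.getElem_ofFn, extPath]
  rw [dif_pos h2]
  simp

lemma Q_const' [Fintype X] [Nonempty X] {Q : (X → ℝ) → ℝ} (hQ : IsCoherent Q) (c : ℝ) :
    Q (fun _ => c) = c := by
  obtain ⟨hsup, hadd, hhom⟩ := hQ
  have hub : Q (fun _ => c) ≤ c := by
    have := hsup (fun _ => c)
    simpa [ciSup_const] using this
  have h0 : Q (fun _ => (0 : ℝ)) = 0 := by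
    have := hhom 0 le_rfl (fun _ => 0)
    simpa using this
  have hneg : Q (fun _ => -c) ≤ -c := by
    have := hsup (fun _ => -c)
    simpa [ciSup_const] using this
  have hlb : (0 : ℝ) ≤ Q (fun _ => c) + Q (fun _ => -c) := by
    have := hadd (fun _ => c) (fun _ => -c)
    simp only [add_neg_cancel] at this
    linarith [h0 ▸ this]
  linarith

lemma E_const' [Fintype X] [Nonempty X] {Q : List X → (X → ℝ) → ℝ}
    {E : ((ℕ → X) → EReal) → List X → EReal}
    (h1 : P1 Q E) (hQ : ∀ s, IsCoherent (Q s)) (c : ℝ) (t : List X) :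
    E (fun _ => (c : EReal)) t = (c : EReal) := by
  have := h1 t (fun _ => c)
  rw [Q_const' (hQ t)] at this
  exact this

lemma E_bounds' [Fintype X] [Nonempty X] {Q : List X → (X → ℝ) → ℝ}
    {E : ((ℕ → X) → EReal) → List X → EReal}
    (h1 : P1 Q E) (h4 : P4 E) (hQ : ∀ s, IsCoherent (Q s))
    {f : (ℕ → X) → EReal} {a b : ℝ}
    (hab : ∀ ω, (a : EReal) ≤ f ω ∧ f ω ≤ (b : EReal)) (t : List X) :
    (a : EReal) ≤ E f t ∧ E f t ≤ (b : EReal) := by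
  constructor
  · have := h4 (fun _ => (a : EReal)) f (fun ω => (hab ω).1) t
    rwa [E_const' h1 hQ a t] at this
  · have := h4 f (fun _ => (b : EReal)) (fun ω => (hab ω).2) t
    rwa [E_const' h1 hQ b t] at this

lemma ereal_real' {x : EReal} {a b : ℝ} (h1 : (a : EReal) ≤ x) (h2 : x ≤ (b : EReal)) :
    ((x.toReal : ℝ) : EReal) = x :=
  EReal.coe_toReal (h2.trans_lt (EReal.coe_lt_top b)).ne
    ((EReal.bot_lt_coe a).trans_le h1).ne'

/-- local computation: an `(|t|+1)`-measurable gamble evaluated at `t` equals `Q t ψ`. -/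
lemma locComp' [Fintype X] [Nonempty X] {Q : List X → (X → ℝ) → ℝ}
    {E : ((ℕ → X) → EReal) → List X → EReal}
    (h1 : P1 Q E) (h2 : P2 E) (t : List X) (g : (ℕ → X) → EReal)
    (hm : NMeas (t.length + 1) g) (hb : IsGambleVal g) :
    E g t = ((Q t (fun x => (g (extPath (t ++ [x]))).toReal) : ℝ) : EReal) := by
  obtain ⟨a, b, hab⟩ := hb
  set ψ : X → ℝ := fun x => (g (extPath (t ++ [x]))).toReal with hψ
  have hpe : ∀ x : X, pref (extPath (t ++ [x])) (t.length + 1) = t ++ [x] := by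
    intro x
    have hl : (t ++ [x]).length = t.length + 1 := by simp
    have := pref_extPath' (t ++ [x])
    rwa [hl] at this
  have hψval : ∀ x : X, ((ψ x : ℝ) : EReal) = g (extPath (t ++ [x])) := fun x =>
    ereal_real' (hab _).1 (hab _).2
  -- pointwise equality on the cylinder
  have hpt : ∀ ω : ℕ → X, ω ∈ cyl t → g ω = ((ψ (ω t.length) : ℝ) : EReal) := by
    intro ω hω
    have hωt : pref ω t.length = t := hω
    have hp1 : pref ω (t.length + 1) = t ++ [ω t.length] := by
      rw [pref_succ', hωt]
    have := hm ω (extPath (t ++ [ω t.length])) (by rw [hp1, hpe])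
    rw [this, hψval]
  -- h is a finitary gamble
  have hmh : NMeas (t.length + 1) (fun ω : ℕ → X => ((ψ (ω t.length) : ℝ) : EReal)) := by
    intro ω₁ ω₂ h
    have := pref_eq_iff'.mp h t.length (Nat.lt_succ_self _)
    simp [this]
  have hbh : IsGambleVal (fun ω : ℕ → X => ((ψ (ω t.length) : ℝ) : EReal)) := by
    refine ⟨a, b, fun ω => ?_⟩
    simp only [hψval]
    exact hab _
  have hP1 : E (fun ω : ℕ → X => ((ψ (ω t.length) : ℝ) : EReal)) t = ((Q t ψ : ℝ) : EReal) :=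
    h1 t ψ
  have hgP2 := h2 g ⟨⟨t.length + 1, hm⟩, a, b, hab⟩ t
  have hhP2 := h2 (fun ω : ℕ → X => ((ψ (ω t.length) : ℝ) : EReal)) ⟨⟨t.length + 1, hmh⟩, hbh⟩ t
  have heq : (fun ω => if ω ∈ cyl t then g ω else 0) =
      (fun ω : ℕ → X => if ω ∈ cyl t then ((ψ (ω t.length) : ℝ) : EReal) else 0) := by
    funext ω
    by_cases hω : ω ∈ cyl t
    · simp only [if_pos hω]
      exact hpt ω hω
    · simp [hω]
  rw [hgP2, heq, ← hhP2, hP1]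

theorem stmt1 {X : Type*} [Fintype X] [Nonempty X]
    (Q : List X → (X → ℝ) → ℝ) (hQ : ∀ s, IsCoherent (Q s))
    (E E' : ((ℕ → X) → EReal) → List X → EReal)
    (hE : P1 Q E ∧ P2 E ∧ P3le E ∧ P4 E) (hEiter : P3eq E)
    (hE' : P1 Q E' ∧ P2 E' ∧ P3le E' ∧ P4 E')
    (f : (ℕ → X) → EReal) (hf : IsFinitaryGamble f) (s : List X) :
    E' f s ≤ E f s := by
  obtain ⟨h1, h2, h3, h4⟩ := hE
  obtain ⟨h1', h2', h3', h4'⟩ := hE'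
  obtain ⟨⟨m, hm⟩, a, b, hab⟩ := hf
  have hfg : IsFinitaryGamble f := ⟨⟨m, hm⟩, a, b, hab⟩
  set n := max m s.length with hn
  have hmn : NMeas n f := fun ω₁ ω₂ h => hm ω₁ ω₂ (pref_mono' (le_max_left _ _) h)
  have key : ∀ j k, k + j = n → ∀ ω : ℕ → X, E' f (pref ω k) ≤ E f (pref ω k) := by
    intro j
    induction j with
    | zero =>
      intro k hk ω
      have hkn : k = n := by omega
      subst hkn
      have hm1 : NMeas ((pref ω n).length + 1) f := by
        rw [pref_length']
        exact fun ω₁ ω₂ h => hmn ω₁ ω₂ (pref_mono' (Nat.le_succ n) h)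
      rw [locComp' h1 h2 _ f hm1 ⟨a, b, hab⟩, locComp' h1' h2' _ f hm1 ⟨a, b, hab⟩]
    | succ j ih =>
      intro k hk ω
      set G : (ℕ → X) → EReal := fun ω' => E f (pref ω' (k + 1)) with hG
      have hGb : ∀ ω', (a : EReal) ≤ G ω' ∧ G ω' ≤ (b : EReal) := fun ω' =>
        E_bounds' h1 h4 hQ hab _
      have hGm : NMeas ((pref ω k).length + 1) G := by
        rw [pref_length']
        intro ω₁ ω₂ h
        simp only [hG, h]
      have step1 : E' f (pref ω k) ≤ E' (fun ω' => E' f (pref ω' (k + 1))) (pref ω k) :=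
        h3' f hfg k ω
      have step2 : E' (fun ω' => E' f (pref ω' (k + 1))) (pref ω k) ≤ E' G (pref ω k) :=
        h4' _ _ (fun ω' => ih (k + 1) (by omega) ω') _
      have step3 : E' G (pref ω k) = E G (pref ω k) := by
        rw [locComp' h1' h2' _ G hGm ⟨a, b, hGb⟩, locComp' h1 h2 _ G hGm ⟨a, b, hGb⟩]
      have step4 : E G (pref ω k) = E f (pref ω k) := (hEiter f hfg k ω).symm
      calc E' f (pref ω k) ≤ E' (fun ω' => E' f (pref ω' (k + 1))) (pref ω k) := step1
        _ ≤ E' G (pref ω k) := step2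
        _ = E G (pref ω k) := step3
        _ = E f (pref ω k) := step4
  have hsn : s.length ≤ n := le_max_right _ _
  have hs : pref (extPath s) s.length = s := pref_extPath' s
  rw [← hs]
  exact key (n - s.length) s.length (by omega) _

end UEP
end

section
/- Let 𝒳 be a nonempty finite set, let q be a probability mass function on 𝒳, and let Q : (𝒳 → ℝ) → ℝ be the associated linear expectation Q(f) = Σ_{x∈𝒳} f(x) q(x). If Q̄ : (𝒳 → ℝ̄) → ℝ̄ is an extension of Q (i.e. Q̄(f) = Q(f) for every bounded real-valued f) that satisfies continuity with respect to upper cuts, Q̄(f) = lim_{c→+∞} Q̄(min(f,c)) for every bounded-below f : 𝒳 → ℝ̄, and continuity with respect to lower cuts, Q̄(f) = lim_{c→−∞} Q̄(max(f,c)) for every f : 𝒳 → ℝ̄, then Q̄(f) = Σ_{x∈𝒳} f(x) q(x) for every f : 𝒳 → ℝ̄, where the sum is computed with the conventions 0·(+∞) = 0·(−∞) = 0 and (+∞)+(−∞) = (−∞)+(+∞) = +∞. -/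
open Filter MeasureTheory
open scoped Classical ENNReal NNReal

namespace UEP

variable {X : Type*}

/-- coercion of a finite real sum into `EReal`. -/
lemma coe_fsum {α : Type*} (s : Finset α) (g : α → ℝ) :
    ((∑ x ∈ s, g x : ℝ) : EReal) = ∑ x ∈ s, (g x : EReal) := by
  induction s using Finset.cons_induction with
  | empty => simp
  | cons a s ha ih => rw [Finset.sum_cons, Finset.sum_cons, EReal.coe_add, ih]

lemma mul_coe_ne_top (a : EReal) (r : ℝ) (hr : 0 ≤ r) (ha : a ≠ ⊤) : a * (r : EReal) ≠ ⊤ := by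
  apply ne_top_of_le_ne_top (EReal.coe_ne_top (a.toReal * r))
  calc a * (r : EReal) ≤ (a.toReal : EReal) * (r : EReal) :=
        mul_le_mul_of_nonneg_right (EReal.le_coe_toReal ha) (by exact_mod_cast hr)
    _ = ((a.toReal * r : ℝ) : EReal) := (EReal.coe_mul _ _).symm

lemma fsum_ne_top {α : Type*} (s : Finset α) (g : α → EReal) (h : ∀ x ∈ s, g x ≠ ⊤) :
    ∑ x ∈ s, g x ≠ ⊤ := by
  induction s using Finset.cons_induction with
  | empty => simp
  | cons a s ha ih =>
      rw [Finset.sum_cons]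
      exact (EReal.add_lt_top (h a (Finset.mem_cons_self a s))
        (ih fun x hx => h x (Finset.mem_cons_of_mem hx))).ne

/-- the bounded-below case of statement 10. -/
lemma keyA {X : Type*} [Fintype X] [Nonempty X]
    (q : X → ℝ) (hq0 : ∀ x, 0 ≤ q x) (hq1 : ∑ x, q x = 1)
    (Qe : (X → EReal) → EReal)
    (hExt : ∀ f : X → ℝ, Qe (fun x => (f x : EReal)) = ((∑ x, f x * q x : ℝ) : EReal))
    (hU : UpperCutCont Qe)
    (f : X → EReal) (a : ℝ) (haf : ∀ x, (a : EReal) ≤ f x) :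
    Qe f = esum Finset.univ (fun x => f x * (q x : EReal)) := by
  have hminmem : ∀ (c : ℝ), a ≤ c → ∀ x : X,
      min (f x) (c : EReal) = (((min (f x) (c : EReal)).toReal : ℝ) : EReal) := by
    intro c hc x
    rw [EReal.coe_toReal]
    · exact ne_top_of_le_ne_top (EReal.coe_ne_top c) (min_le_right _ _)
    · have h1 : (a : EReal) ≤ min (f x) c := le_min (haf x) (EReal.coe_le_coe_iff.2 hc)
      exact (lt_of_lt_of_le (EReal.bot_lt_coe a) h1).ne'
  set S : ℝ → ℝ := fun c => ∑ x, (min (f x) (c : EReal)).toReal * q x with hS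
  have hQS : ∀ c : ℝ, a ≤ c → Qe (fun x => min (f x) (c : EReal)) = ((S c : ℝ) : EReal) := by
    intro c hc
    calc Qe (fun x => min (f x) (c : EReal))
        = Qe (fun x => (((min (f x) (c : EReal)).toReal : ℝ) : EReal)) := by
          congr 1; funext x; exact hminmem c hc x
      _ = ((S c : ℝ) : EReal) := hExt _
  have hT := hU f ⟨a, haf⟩
  have hT' : Tendsto (fun c : ℝ => ((S c : ℝ) : EReal)) atTop (nhds (Qe f)) := by
    apply hT.congr'
    filter_upwards [eventually_ge_atTop a] with c hc
    exact hQS c hc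
  have hminlb : ∀ (c : ℝ), a ≤ c → ∀ x : X, a ≤ (min (f x) (c : EReal)).toReal := by
    intro c hc x
    have h1 : (a : EReal) ≤ min (f x) c := le_min (haf x) (EReal.coe_le_coe_iff.2 hc)
    have := EReal.toReal_le_toReal h1 (EReal.coe_ne_bot a)
      (ne_top_of_le_ne_top (EReal.coe_ne_top c) (min_le_right _ _))
    simpa using this
  by_cases htop : ∃ x, f x = ⊤ ∧ q x ≠ 0
  · obtain ⟨x0, hx0, hqx0⟩ := htop
    have hqpos : 0 < q x0 := lt_of_le_of_ne (hq0 x0) (Ne.symm hqx0)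
    have hesum : esum Finset.univ (fun x => f x * (q x : EReal)) = ⊤ := by
      rw [esum, if_pos]
      exact ⟨x0, Finset.mem_univ x0, by rw [hx0]; exact EReal.top_mul_coe_of_pos hqpos⟩
    rw [hesum]
    have hSlb : ∀ c : ℝ, a ≤ c → c * q x0 + a * (1 - q x0) ≤ S c := by
      intro c hc
      have hrw : S c = (min (f x0) (c : EReal)).toReal * q x0
          + ∑ x ∈ Finset.univ.erase x0, (min (f x) (c : EReal)).toReal * q x :=
        (Finset.add_sum_erase _ _ (Finset.mem_univ x0)).symm
      have hterm : (min (f x0) (c : EReal)).toReal * q x0 = c * q x0 := by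
        rw [hx0, min_eq_right (le_top : (c : EReal) ≤ ⊤), EReal.toReal_coe]
      have hrest : a * (1 - q x0) ≤ ∑ x ∈ Finset.univ.erase x0,
          (min (f x) (c : EReal)).toReal * q x := by
        have h2 : ∑ x ∈ Finset.univ.erase x0, q x = 1 - q x0 := by
          rw [Finset.sum_erase_eq_sub (Finset.mem_univ x0), hq1]
        rw [← h2, Finset.mul_sum]
        exact Finset.sum_le_sum fun x _ =>
          mul_le_mul_of_nonneg_right (hminlb c hc x) (hq0 x)
      rw [hrw, hterm]
      exact add_le_add le_rfl hrest
    have hlin : Tendsto (fun c : ℝ => c * q x0 + a * (1 - q x0)) atTop atTop :=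
      tendsto_atTop_add_const_right _ _ (tendsto_id.atTop_mul_const hqpos)
    have hStop : Tendsto S atTop atTop :=
      tendsto_atTop_mono' atTop
        ((eventually_ge_atTop a).mono fun c hc => hSlb c hc) hlin
    have hT'' : Tendsto (fun c : ℝ => ((S c : ℝ) : EReal)) atTop (nhds ⊤) := by
      rw [EReal.tendsto_nhds_top_iff_real]
      intro r
      filter_upwards [hStop.eventually_ge_atTop (r + 1)] with c hc
      exact_mod_cast lt_of_lt_of_le (lt_add_one r) hc
    exact tendsto_nhds_unique hT' hT''
  · push_neg at htop
    have hreal : ∀ x, q x ≠ 0 → f x = (((f x).toReal : ℝ) : EReal) := by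
      intro x hx
      rw [EReal.coe_toReal (fun h => hx (htop x h))
        (lt_of_lt_of_le (EReal.bot_lt_coe a) (haf x)).ne']
    have hesum : esum Finset.univ (fun x => f x * (q x : EReal))
        = ((∑ x, (f x).toReal * q x : ℝ) : EReal) := by
      rw [esum, if_neg]
      · rw [coe_fsum]
        apply Finset.sum_congr rfl
        intro x _
        by_cases hqx : q x = 0
        · simp [hqx]
        · rw [hreal x hqx, ← EReal.coe_mul, EReal.toReal_coe]
      · rintro ⟨x, -, hx⟩
        by_cases hqx : q x = 0
        · simp [hqx] at hx
        · rw [hreal x hqx, ← EReal.coe_mul] at hx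
          exact EReal.coe_ne_top _ hx
    set c0 : ℝ := max a (∑ x, |(f x).toReal|) with hc0
    have hc0f : ∀ x, (f x).toReal ≤ c0 := by
      intro x
      refine le_trans (le_trans (le_abs_self _) ?_) (le_max_right _ _)
      exact Finset.single_le_sum (f := fun y => |(f y).toReal|)
        (fun i _ => abs_nonneg _) (Finset.mem_univ x)
    have hconst : ∀ c : ℝ, c0 ≤ c → S c = ∑ x, (f x).toReal * q x := by
      intro c hc
      apply Finset.sum_congr rfl
      intro x _
      by_cases hqx : q x = 0
      · simp [hqx]
      · have hfx : f x ≤ (c : EReal) := by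
          rw [hreal x hqx]
          exact EReal.coe_le_coe_iff.2 (le_trans (hc0f x) hc)
        rw [min_eq_left hfx]
    have hT'' : Tendsto (fun c : ℝ => ((S c : ℝ) : EReal)) atTop
        (nhds ((∑ x, (f x).toReal * q x : ℝ) : EReal)) := by
      apply Tendsto.congr' _ tendsto_const_nhds
      filter_upwards [eventually_ge_atTop c0] with c hc
      rw [hconst c hc]
    rw [hesum]
    exact tendsto_nhds_unique hT' hT''

theorem stmt10 {X : Type*} [Fintype X] [Nonempty X]
    (q : X → ℝ) (hq0 : ∀ x, 0 ≤ q x) (hq1 : ∑ x, q x = 1)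
    (Qe : (X → EReal) → EReal)
    (hExt : ∀ f : X → ℝ, Qe (fun x => (f x : EReal)) = ((∑ x, f x * q x : ℝ) : EReal))
    (hU : UpperCutCont Qe) (hL : LowerCutCont Qe) :
    ∀ f : X → EReal, Qe f = esum Finset.univ (fun x => f x * (q x : EReal)) := by
  intro f
  have hTL := hL f
  have hkey : ∀ c : ℝ, Qe (fun x => max (f x) (c : EReal)) =
      esum Finset.univ (fun x => max (f x) (c : EReal) * (q x : EReal)) :=
    fun c => keyA q hq0 hq1 Qe hExt hU _ c (fun x => le_max_right _ _)
  by_cases htop : ∃ x, f x = ⊤ ∧ q x ≠ 0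
  · obtain ⟨x0, hx0, hqx0⟩ := htop
    have hqpos : 0 < q x0 := lt_of_le_of_ne (hq0 x0) (Ne.symm hqx0)
    have h1 : esum Finset.univ (fun x => f x * (q x : EReal)) = ⊤ := by
      rw [esum, if_pos]
      exact ⟨x0, Finset.mem_univ x0, by rw [hx0]; exact EReal.top_mul_coe_of_pos hqpos⟩
    have h2 : ∀ c : ℝ, esum Finset.univ
        (fun x => max (f x) (c : EReal) * (q x : EReal)) = ⊤ := by
      intro c
      rw [esum, if_pos]
      exact ⟨x0, Finset.mem_univ x0, by
        rw [hx0, max_eq_left (le_top : (c : EReal) ≤ ⊤)]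
        exact EReal.top_mul_coe_of_pos hqpos⟩
    rw [h1]
    exact tendsto_nhds_unique
      (hTL.congr fun c => (hkey c).trans (h2 c)) tendsto_const_nhds
  · push_neg at htop
    have hnotop : ∀ (g : X → EReal), (∀ x, g x = ⊤ → q x = 0) →
        esum Finset.univ (fun x => g x * (q x : EReal)) = ∑ x, g x * (q x : EReal) := by
      intro g hg
      rw [esum, if_neg]
      rintro ⟨x, -, hx⟩
      by_cases hqx : q x = 0
      · rw [hqx] at hx; simp at hx
      · exact mul_coe_ne_top (g x) (q x) (hq0 x) (fun h => hqx (hg x h)) hx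
    have hmaxtop : ∀ (c : ℝ) (x : X), max (f x) (c : EReal) = ⊤ → q x = 0 := by
      intro c x hx
      rcases max_cases (f x) (c : EReal) with ⟨h1, -⟩ | ⟨h1, -⟩ <;> rw [h1] at hx
      · exact htop x hx
      · exact absurd hx (EReal.coe_ne_top c)
    have hfeq : esum Finset.univ (fun x => f x * (q x : EReal))
        = ∑ x, f x * (q x : EReal) := hnotop f htop
    have hTL' : Tendsto (fun c : ℝ => ∑ x, max (f x) (c : EReal) * (q x : EReal))
        atBot (nhds (Qe f)) :=
      hTL.congr fun c => (hkey c).trans (hnotop _ (hmaxtop c))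
    rw [hfeq]
    by_cases hbot : ∃ x, f x = ⊥ ∧ q x ≠ 0
    · obtain ⟨x0, hx0, hqx0⟩ := hbot
      have hqpos : 0 < q x0 := lt_of_le_of_ne (hq0 x0) (Ne.symm hqx0)
      have hsbot : ∑ x, f x * (q x : EReal) = ⊥ := by
        have h3 : ∑ x, f x * (q x : EReal) = f x0 * (q x0 : EReal)
            + ∑ x ∈ Finset.univ.erase x0, f x * (q x : EReal) :=
          (Finset.add_sum_erase _ _ (Finset.mem_univ x0)).symm
        rw [h3, hx0, EReal.bot_mul_coe_of_pos hqpos, EReal.bot_add]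
      rw [hsbot]
      set R : EReal := ∑ x ∈ Finset.univ.erase x0,
        max (f x) (0 : EReal) * (q x : EReal) with hR
      have hRtop : R ≠ ⊤ := by
        apply fsum_ne_top
        intro x _
        by_cases hqx : q x = 0
        · rw [hqx]; simp
        · apply mul_coe_ne_top _ _ (hq0 x)
          intro h
          rcases max_cases (f x) (0 : EReal) with ⟨h1, -⟩ | ⟨h1, -⟩ <;> rw [h1] at h
          · exact hqx (htop x h)
          · exact absurd h (by simp)
      have hbound : ∀ c : ℝ, c ≤ 0 → ∑ x, max (f x) (c : EReal) * (q x : EReal)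
          ≤ ((c * q x0 + R.toReal : ℝ) : EReal) := by
        intro c hc
        have h3 : ∑ x, max (f x) (c : EReal) * (q x : EReal)
            = max (f x0) (c : EReal) * (q x0 : EReal)
              + ∑ x ∈ Finset.univ.erase x0, max (f x) (c : EReal) * (q x : EReal) :=
          (Finset.add_sum_erase _ _ (Finset.mem_univ x0)).symm
        have h4 : max (f x0) (c : EReal) = (c : EReal) := by
          rw [hx0]; exact max_eq_right bot_le
        rw [h3, h4, EReal.coe_add, ← EReal.coe_mul]
        refine add_le_add le_rfl (le_trans ?_ (EReal.le_coe_toReal hRtop))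
        refine Finset.sum_le_sum fun x _ => ?_
        exact mul_le_mul_of_nonneg_right
          (max_le_max le_rfl (EReal.coe_le_coe_iff.2 hc))
          (by exact_mod_cast hq0 x)
      have htends : Tendsto (fun c : ℝ => ∑ x, max (f x) (c : EReal) * (q x : EReal))
          atBot (nhds ⊥) := by
        rw [EReal.tendsto_nhds_bot_iff_real]
        intro r
        have hlin : Tendsto (fun c : ℝ => c * q x0 + R.toReal) atBot atBot :=
          tendsto_atBot_add_const_right _ _ (tendsto_id.atBot_mul_const hqpos)
        filter_upwards [eventually_le_atBot 0,
          hlin.eventually (eventually_lt_atBot r)] with c hc1 hc2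
        exact lt_of_le_of_lt (hbound c hc1) (EReal.coe_lt_coe_iff.2 hc2)
      exact tendsto_nhds_unique hTL' htends
    · push_neg at hbot
      have hreal : ∀ x, q x ≠ 0 → f x = (((f x).toReal : ℝ) : EReal) := fun x hx =>
        (EReal.coe_toReal (fun h => hx (htop x h)) (fun h => hx (hbot x h))).symm
      set c1 : ℝ := -(1 + ∑ x, |(f x).toReal|) with hc1
      have hc1f : ∀ x, q x ≠ 0 → (c1 : EReal) ≤ f x := by
        intro x hx
        rw [hreal x hx]
        apply EReal.coe_le_coe_iff.2
        have h1 : |(f x).toReal| ≤ ∑ y, |(f y).toReal| :=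
          Finset.single_le_sum (f := fun y => |(f y).toReal|)
            (fun i _ => abs_nonneg _) (Finset.mem_univ x)
        have h2 := neg_abs_le ((f x).toReal)
        simp only [hc1]
        linarith
      have hconst : ∀ c : ℝ, c ≤ c1 → ∑ x, max (f x) (c : EReal) * (q x : EReal)
          = ∑ x, f x * (q x : EReal) := by
        intro c hc
        apply Finset.sum_congr rfl
        intro x _
        by_cases hqx : q x = 0
        · rw [hqx]; simp
        · rw [max_eq_left (le_trans (EReal.coe_le_coe_iff.2 hc) (hc1f x hqx))]
      have htends : Tendsto (fun c : ℝ => ∑ x, max (f x) (c : EReal) * (q x : EReal))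
          atBot (nhds (∑ x, f x * (q x : EReal))) := by
        apply Tendsto.congr' _ tendsto_const_nhds
        filter_upwards [eventually_le_atBot c1] with c hc
        rw [hconst c hc]
      exact tendsto_nhds_unique hTL' htends


end UEP
end
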